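/- arXiv:1006.1087 — 2 statements merged into one kernel-verified Lean document; each statement's English description precedes it below -/
import Mathlib

section
/- Let G be a very well-covered graph with 2n vertices satisfying (∗). A prime ideal 𝔭 is an associated prime of R/I(G) (equivalently, the complement of its generators is a maximum independent set, since G is unmixed) if and only if 𝔭 = (x_i : i ∉ Ω_A) + (y_i : i ∈ Ω_A) for some antichain A in the condensation 𝔡̂_G such that Ω_A contains no undirected edge of 𝔡_G. Equivalently, in graph language: the minimal vertex covers of G are exactly the sets {x_i : i ∉ Ω_A} ∪ {y_i : i ∈ Ω_A} over such antichains A. -/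
open Relation

/-- `C` is a vertex cover of `G`. -/
def IsVC {V : Type*} (G : SimpleGraph V) (C : Set V) : Prop :=
  ∀ ⦃u v : V⦄, G.Adj u v → u ∈ C ∨ v ∈ C

/-- `C` is a minimal vertex cover of `G`. -/
def IsMinVC {V : Type*} (G : SimpleGraph V) (C : Set V) : Prop :=
  IsVC G C ∧ ∀ D : Set V, IsVC G D → D ⊆ C → D = C

/-- `S` is an independent set of `G`. -/
def IsIndep {V : Type*} (G : SimpleGraph V) (S : Set V) : Prop :=
  ∀ u ∈ S, ∀ v ∈ S, ¬ G.Adj u v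

/-- `S` is a maximal independent set of `G`. -/
def IsMaxIndep {V : Type*} (G : SimpleGraph V) (S : Set V) : Prop :=
  IsIndep G S ∧ ∀ T : Set V, IsIndep G T → S ⊆ T → T = S

/-- `G` has no isolated vertices. -/
def NoIsolated {V : Type*} (G : SimpleGraph V) : Prop := ∀ v, ∃ w, G.Adj v w

/-- The vertex set `{x_1,...,x_n} ∪ {y_1,...,y_n}`: `xv i = Sum.inl i`, `yv i = Sum.inr i`. -/
abbrev Vtx (n : ℕ) := Fin n ⊕ Fin n

def xv {n : ℕ} (i : Fin n) : Vtx n := Sum.inl i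
def yv {n : ℕ} (i : Fin n) : Vtx n := Sum.inr i

/-- Condition (∗): X is a minimal vertex cover, Y is a maximal independent set,
and `x_i y_i` is an edge for every `i`. -/
def StarCond {n : ℕ} (G : SimpleGraph (Vtx n)) : Prop :=
  IsMinVC G (Set.range xv) ∧ IsMaxIndep G (Set.range yv) ∧ ∀ i, G.Adj (xv i) (yv i)

/-- Condition (∗∗): `x_i y_j ∈ E(G)` implies `i ≤ j`. -/
def StarStarCond {n : ℕ} (G : SimpleGraph (Vtx n)) : Prop :=
  ∀ i j : Fin n, G.Adj (xv i) (yv j) → i ≤ j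

/-- Condition (i): for distinct `i,j,k` and `z_i ∈ {x_i,y_i}`, if `z_i x_j` and `y_j x_k`
are edges then so is `z_i x_k`. -/
def CondI {n : ℕ} (G : SimpleGraph (Vtx n)) : Prop :=
  ∀ i j k : Fin n, i ≠ j → j ≠ k → i ≠ k →
    ∀ z ∈ ({xv i, yv i} : Set (Vtx n)),
      G.Adj z (xv j) → G.Adj (yv j) (xv k) → G.Adj z (xv k)

/-- Condition (ii): `x_i y_j ∈ E(G)` implies `x_i x_j ∉ E(G)`. -/
def CondII {n : ℕ} (G : SimpleGraph (Vtx n)) : Prop :=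
  ∀ i j : Fin n, G.Adj (xv i) (yv j) → ¬ G.Adj (xv i) (xv j)

/-- The minimum vertex cover size of `G` (the height of the edge ideal) is at least `n`. -/
def HeightN {n : ℕ} (G : SimpleGraph (Vtx n)) : Prop :=
  ∀ C : Finset (Vtx n), IsVC G ↑C → n ≤ C.card

/-- Directed edge `i → j` of the semidirected graph `𝔡_G`. -/
def dirEdge {n : ℕ} (G : SimpleGraph (Vtx n)) (i j : Fin n) : Prop :=
  i ≠ j ∧ G.Adj (xv i) (yv j)

/-- Undirected edge `ij` of the semidirected graph `𝔡_G`. -/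
def undirEdge {n : ℕ} (G : SimpleGraph (Vtx n)) (i j : Fin n) : Prop :=
  G.Adj (xv i) (xv j)
/-- The strong-connectivity setoid of a relation: mutual reachability. -/
def scSetoid {α : Type*} (r : α → α → Prop) : Setoid α where
  r i j := ReflTransGen r i j ∧ ReflTransGen r j i
  iseqv := ⟨fun _ => ⟨.refl, .refl⟩, fun h => ⟨h.2, h.1⟩,
    fun h1 h2 => ⟨h1.1.trans h2.1, h2.2.trans h1.2⟩⟩

/-- The set of strong components of the semidirected graph `𝔡_G`. -/
def SC {n : ℕ} (G : SimpleGraph (Vtx n)) : Type :=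
  Quotient (scSetoid (dirEdge G))

/-- The class of `i` in the strong components. -/
def scMk {n : ℕ} (G : SimpleGraph (Vtx n)) (i : Fin n) : SC G :=
  Quotient.mk (scSetoid (dirEdge G)) i

/-- Directed edge `a → b` of the condensation `𝔡̂_G`: the components are distinct and
there is a directed path in `𝔡_G` from a vertex of `Z_a` to a vertex of `Z_b`. -/
def condDir {n : ℕ} (G : SimpleGraph (Vtx n)) (a b : SC G) : Prop :=
  a ≠ b ∧ ∃ i j : Fin n, scMk G i = a ∧ scMk G j = b ∧ ReflTransGen (dirEdge G) i j

/-- Undirected edge `ab` of the condensation `𝔡̂_G`. -/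
def condUndir {n : ℕ} (G : SimpleGraph (Vtx n)) (a b : SC G) : Prop :=
  a ≠ b ∧ ∃ i j : Fin n, scMk G i = a ∧ scMk G j = b ∧ undirEdge G i j

/-- `A'` is an antichain of the condensation `𝔡̂_G`. -/
def AntichainC {n : ℕ} (G : SimpleGraph (Vtx n)) (A' : Finset (SC G)) : Prop :=
  ∀ a ∈ A', ∀ b ∈ A', a ≠ b → ¬ TransGen (condDir G) a b

/-- `Ω_{A'}` for an antichain `A'` of the condensation: the union of the components `Z_b`
with `b ⪰ a` for some `a ∈ A'`. -/
def OmegaC {n : ℕ} (G : SimpleGraph (Vtx n)) (A' : Finset (SC G)) : Set (Fin n) :=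
  {j | ∃ a ∈ A', ReflTransGen (condDir G) a (scMk G j)}

/-- The vertex set `{x_i : i ∉ Ω} ∪ {y_i : i ∈ Ω}`. -/
def coverOf {n : ℕ} (Ω : Set (Fin n)) : Set (Vtx n) :=
  {v | ∃ i : Fin n, (v = xv i ∧ i ∉ Ω) ∨ (v = yv i ∧ i ∈ Ω)}

/-!
The edges `x_i y_i` form a perfect matching, so a minimal vertex cover contains at least one of
`x_i, y_i`. It cannot contain both: (i), (ii) and the matching leave no possible pair of private
neighbours (neighbours outside the cover) for `x_i` and `y_i`. Hence the minimal covers are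
exactly the covers of the form `{x_i : i ∉ Ω} ∪ {y_i : i ∈ Ω}`, and such a set is a cover iff `Ω`
is closed under the directed edges of `𝔡_G` and contains no undirected edge. A closed `Ω` is an
up-set of the condensation, which is finite and acyclic, so `Ω = Ω_A` for `A` the antichain of
the minimal components inside `Ω`.
-/

lemma Relation.exists_reflTransGen_forall_not_transGen {α : Type*} [Finite α]
    {r : α → α → Prop} (hr : ∀ a, ¬ TransGen r a a) {S : Set α} {c : α} (hc : c ∈ S) :
    ∃ a ∈ S, ReflTransGen r a c ∧ ∀ b ∈ S, ¬ TransGen r b a := by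
  have : Std.Irrefl (TransGen r) := ⟨hr⟩
  obtain ⟨a, ⟨haS, hac⟩, hmin⟩ :=
    (Finite.wellFounded_of_trans_of_irrefl (TransGen r)).has_min
      {a | a ∈ S ∧ ReflTransGen r a c} ⟨c, hc, .refl⟩
  exact ⟨a, haS, hac, fun b hbS hba => hmin b ⟨hbS, hba.to_reflTransGen.trans hac⟩ hba⟩

lemma IsMinVC.exists_adj_notMem {V : Type*} {G : SimpleGraph V} {C : Set V}
    (hC : IsMinVC G C) {v : V} (hv : v ∈ C) : ∃ w, G.Adj v w ∧ w ∉ C := by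
  by_contra! h
  have hcover : IsVC G (C \ {v}) := by
    intro u w huw
    by_cases hu : u = v
    · subst hu
      exact Or.inr ⟨h w huw, huw.ne'⟩
    by_cases hw : w = v
    · subst hw
      exact Or.inl ⟨h u huw.symm, huw.ne⟩
    exact (hC.1 huw).imp (fun hu' => ⟨hu', hu⟩) (fun hw' => ⟨hw', hw⟩)
  have hv' : v ∈ C \ {v} := (hC.2 _ hcover Set.sdiff_subset).symm ▸ hv
  exact hv'.2 rfl

section Cover

variable {n : ℕ} {G : SimpleGraph (Vtx n)}

lemma Vtx.exists_eq_xv_or_yv (v : Vtx n) : (∃ i, v = xv i) ∨ ∃ i, v = yv i := by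
  rcases v with i | i
  exacts [.inl ⟨i, rfl⟩, .inr ⟨i, rfl⟩]

@[simp]
lemma xv_mem_coverOf {Ω : Set (Fin n)} {i : Fin n} : xv i ∈ coverOf Ω ↔ i ∉ Ω := by
  simp [coverOf, xv, yv]

@[simp]
lemma yv_mem_coverOf {Ω : Set (Fin n)} {i : Fin n} : yv i ∈ coverOf Ω ↔ i ∈ Ω := by
  simp [coverOf, xv, yv]

lemma StarCond.not_adj_yv_yv (hstar : StarCond G) (i j : Fin n) : ¬ G.Adj (yv i) (yv j) :=
  hstar.2.1.1 _ ⟨i, rfl⟩ _ ⟨j, rfl⟩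

lemma IsMinVC.not_xv_mem_and_yv_mem (hstar : StarCond G) (h1 : CondI G) (h2 : CondII G)
    {C : Set (Vtx n)} (hC : IsMinVC G C) (i : Fin n) : ¬ (xv i ∈ C ∧ yv i ∈ C) := by
  rintro ⟨hx, hy⟩
  obtain ⟨w, hyw, hw⟩ := hC.exists_adj_notMem hy
  obtain ⟨u, hxu, hu⟩ := hC.exists_adj_notMem hx
  have uncovered : ¬ G.Adj u w := fun h => (hC.1 h).elim hu hw
  obtain ⟨k, rfl⟩ | ⟨k, rfl⟩ := w.exists_eq_xv_or_yv
  swap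
  · exact hstar.not_adj_yv_yv i k hyw
  have hki : k ≠ i := by rintro rfl; exact hw hx
  obtain ⟨j, rfl⟩ | ⟨j, rfl⟩ := u.exists_eq_xv_or_yv
  · have hji : j ≠ i := by rintro rfl; exact hxu.ne rfl
    by_cases hjk : j = k
    · subst hjk
      exact h2 j i hyw.symm hxu.symm
    · exact uncovered (h1 j i k hji hki.symm hjk _ (Set.mem_insert _ _) hxu.symm hyw)
  · have hji : j ≠ i := by rintro rfl; exact hu hy
    by_cases hjk : j = k
    · subst hjk
      exact uncovered (hstar.2.2 j).symm
    · exact uncovered (h1 j i k hji hki.symm hjk _ (Set.mem_insert_of_mem _ rfl) hxu.symm hyw)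

lemma IsMinVC.eq_coverOf (hstar : StarCond G) (h1 : CondI G) (h2 : CondII G)
    {C : Set (Vtx n)} (hC : IsMinVC G C) : C = coverOf {i | yv i ∈ C} := by
  ext v
  obtain ⟨i, rfl⟩ | ⟨i, rfl⟩ := v.exists_eq_xv_or_yv
  · simp only [xv_mem_coverOf, Set.mem_ofPred_eq]
    exact ⟨fun hx hy => hC.not_xv_mem_and_yv_mem hstar h1 h2 i ⟨hx, hy⟩,
      fun hy => (hC.1 (hstar.2.2 i)).resolve_right hy⟩
  · simp

def IsDirClosed (G : SimpleGraph (Vtx n)) (Ω : Set (Fin n)) : Prop :=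
  ∀ i ∈ Ω, ∀ j, dirEdge G i j → j ∈ Ω

lemma IsDirClosed.mem_of_reflTransGen {Ω : Set (Fin n)} (hΩ : IsDirClosed G Ω) {i j : Fin n}
    (hi : i ∈ Ω) (hij : ReflTransGen (dirEdge G) i j) : j ∈ Ω := by
  induction hij with
  | refl => exact hi
  | tail _ hjk ih => exact hΩ _ ih _ hjk

lemma isVC_coverOf_iff (hstar : StarCond G) {Ω : Set (Fin n)} :
    IsVC G (coverOf Ω) ↔ IsDirClosed G Ω ∧ ∀ i ∈ Ω, ∀ j ∈ Ω, ¬ undirEdge G i j := by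
  constructor
  · intro hcover
    refine ⟨fun i hi j hij => ?_, fun i hi j hj hij => ?_⟩
    · simpa [hi] using hcover hij.2
    · simpa [hi, hj] using hcover hij
  · rintro ⟨hcl, hund⟩ u v huv
    obtain ⟨i, rfl⟩ | ⟨i, rfl⟩ := u.exists_eq_xv_or_yv <;>
      obtain ⟨j, rfl⟩ | ⟨j, rfl⟩ := v.exists_eq_xv_or_yv
    · simp only [xv_mem_coverOf]
      by_contra! h
      exact hund i h.1 j h.2 huv
    · simp only [xv_mem_coverOf, yv_mem_coverOf, or_iff_not_imp_left, not_not]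
      intro hi
      by_cases hij : i = j
      exacts [hij ▸ hi, hcl i hi j ⟨hij, huv⟩]
    · simp only [xv_mem_coverOf, yv_mem_coverOf, or_iff_not_imp_right, not_not]
      intro hj
      by_cases hji : j = i
      exacts [hji ▸ hj, hcl j hj i ⟨hji, huv.symm⟩]
    · exact absurd huv (hstar.not_adj_yv_yv i j)

/-- Removing any vertex from such a cover uncovers its edge `x_i y_i`. -/
lemma isMinVC_coverOf (hmatch : ∀ i, G.Adj (xv i) (yv i)) {Ω : Set (Fin n)}
    (hcover : IsVC G (coverOf Ω)) : IsMinVC G (coverOf Ω) := by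
  refine ⟨hcover, fun D hD hDC => hDC.antisymm fun v hv => ?_⟩
  obtain ⟨i, rfl⟩ | ⟨i, rfl⟩ := v.exists_eq_xv_or_yv
  · have hi : i ∉ Ω := xv_mem_coverOf.mp hv
    exact (hD (hmatch i)).resolve_right fun hy => hi (yv_mem_coverOf.mp (hDC hy))
  · have hi : i ∈ Ω := yv_mem_coverOf.mp hv
    exact (hD (hmatch i)).resolve_left fun hx => xv_mem_coverOf.mp (hDC hx) hi

theorem isMinVC_iff_exists_coverOf (hstar : StarCond G) (h1 : CondI G) (h2 : CondII G)
    {C : Set (Vtx n)} :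
    IsMinVC G C ↔ ∃ Ω : Set (Fin n), IsDirClosed G Ω ∧
      (∀ i ∈ Ω, ∀ j ∈ Ω, ¬ undirEdge G i j) ∧ C = coverOf Ω := by
  constructor
  · intro hC
    have hCΩ := hC.eq_coverOf hstar h1 h2
    obtain ⟨hcl, hund⟩ := (isVC_coverOf_iff hstar).mp (hCΩ ▸ hC.1)
    exact ⟨_, hcl, hund, hCΩ⟩
  · rintro ⟨Ω, hcl, hund, rfl⟩
    exact isMinVC_coverOf hstar.2.2 ((isVC_coverOf_iff hstar).mpr ⟨hcl, hund⟩)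

end Cover

section Condensation

variable {n : ℕ} {G : SimpleGraph (Vtx n)}

instance : Finite (SC G) := Quotient.finite _

lemma reflTransGen_dirEdge_of_condDir {a b : SC G} (hab : ReflTransGen (condDir G) a b)
    {i j : Fin n} (hi : scMk G i = a) (hj : scMk G j = b) : ReflTransGen (dirEdge G) i j := by
  induction hab generalizing j with
  | refl => exact (Quotient.exact (hi.trans hj.symm)).1
  | tail _ hbc ih =>
    obtain ⟨-, k, l, hk, hl, hkl⟩ := hbc
    exact ((ih hk).trans hkl).trans (Quotient.exact (hl.trans hj.symm)).1

lemma reflTransGen_condDir_scMk {i j : Fin n} (hij : ReflTransGen (dirEdge G) i j) :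
    ReflTransGen (condDir G) (scMk G i) (scMk G j) := by
  induction hij with
  | refl => exact .refl
  | @tail k l _ hkl ih =>
    by_cases he : scMk G k = scMk G l
    · rwa [← he]
    · exact ih.tail ⟨he, k, l, rfl, rfl, .single hkl⟩

lemma eq_of_reflTransGen_condDir {a b : SC G} (hab : ReflTransGen (condDir G) a b)
    (hba : ReflTransGen (condDir G) b a) : a = b := by
  induction a using Quotient.inductionOn
  induction b using Quotient.inductionOn
  exact Quotient.sound
    ⟨reflTransGen_dirEdge_of_condDir hab rfl rfl, reflTransGen_dirEdge_of_condDir hba rfl rfl⟩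

lemma not_transGen_condDir_self (a : SC G) : ¬ TransGen (condDir G) a a := fun h =>
  let ⟨_, hab, hba⟩ := TransGen.tail'_iff.mp h
  hba.1 (eq_of_reflTransGen_condDir (.single hba) hab)

lemma isDirClosed_omegaC (A' : Finset (SC G)) : IsDirClosed G (OmegaC G A') := by
  rintro i ⟨a, ha, hai⟩ j hij
  exact ⟨a, ha, hai.trans (reflTransGen_condDir_scMk (.single hij))⟩

/-- The antichain is the set of minimal components of `Ω` in the condensation. -/
lemma IsDirClosed.exists_antichainC_omegaC_eq {Ω : Set (Fin n)} (hΩ : IsDirClosed G Ω) :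
    ∃ A' : Finset (SC G), AntichainC G A' ∧ OmegaC G A' = Ω := by
  set S := scMk G '' Ω
  set A : Set (SC G) := {a | a ∈ S ∧ ∀ b ∈ S, ¬ TransGen (condDir G) b a}
  refine ⟨A.toFinite.toFinset, fun a ha b hb _ hab => ?_, Set.Subset.antisymm ?_ fun j hj => ?_⟩
  · simp only [Set.Finite.mem_toFinset, A] at ha hb
    exact hb.2 a ha.1 hab
  · rintro j ⟨a, ha, haj⟩
    obtain ⟨⟨i, hi, rfl⟩, -⟩ := A.toFinite.mem_toFinset.mp ha
    exact hΩ.mem_of_reflTransGen hi (reflTransGen_dirEdge_of_condDir haj rfl rfl)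
  · obtain ⟨a, haS, haj, hmin⟩ := exists_reflTransGen_forall_not_transGen
      not_transGen_condDir_self (Set.mem_image_of_mem _ hj)
    exact ⟨a, A.toFinite.mem_toFinset.mpr ⟨haS, hmin⟩, haj⟩

end Condensation

theorem minimal_covers_classification_general {n : ℕ} (G : SimpleGraph (Vtx n))
    (hstar : StarCond G)
    (h1 : CondI G) (h2 : CondII G) :
    ∀ C : Set (Vtx n), IsMinVC G C ↔
      ∃ A' : Finset (SC G), AntichainC G A' ∧
        (∀ i ∈ OmegaC G A', ∀ j ∈ OmegaC G A', ¬ undirEdge G i j) ∧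
        C = coverOf (OmegaC G A') := by
  intro C
  rw [isMinVC_iff_exists_coverOf hstar h1 h2]
  constructor
  · rintro ⟨Ω, hcl, hund, rfl⟩
    obtain ⟨A', hA', rfl⟩ := hcl.exists_antichainC_omegaC_eq
    exact ⟨A', hA', hund, rfl⟩
  · rintro ⟨A', -, hund, rfl⟩
    exact ⟨_, isDirClosed_omegaC A', hund, rfl⟩

/-- Lemma 4.8, in graph language. Let `G` be a very well-covered graph
with `2n` vertices satisfying (∗). The minimal vertex covers of `G` (i.e. the associated
primes of `R/I(G)`) are exactly the sets `{x_i : i ∉ Ω_A} ∪ {y_i : i ∈ Ω_A}`, for `A` an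
antichain of the condensation `𝔡̂_G` such that `Ω_A` contains no undirected edge of `𝔡_G`. -/
theorem minimal_covers_classification {n : ℕ} (G : SimpleGraph (Vtx n))
    (hiso : NoIsolated G) (hht : HeightN G) (hstar : StarCond G)
    (h1 : CondI G) (h2 : CondII G) :
    ∀ C : Set (Vtx n), IsMinVC G C ↔
      ∃ A' : Finset (SC G), AntichainC G A' ∧
        (∀ i ∈ OmegaC G A', ∀ j ∈ OmegaC G A', ¬ undirEdge G i j) ∧
        C = coverOf (OmegaC G A') :=
  minimal_covers_classification_general G hstar h1 h2
end

section
/- If a simple graph G is well-covered with independence number equal to |V(G)|/2 (very well-covered), then G has a perfect matching. -/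
open Relation

/-!
Take a maximal independent set `S`; then `2|S| = |V|`, so it suffices to match `S` into its
complement, i.e. to check Hall's condition `|A| ≤ |N(A)|` for `A ⊆ S`. This holds for every
independent set `A` without isolated vertices and every `B ⊇ N(A)`, by induction on `B`: pick a
maximal independent set `T` meeting `B`. Since `(T \ B) ∪ A` is independent and `|T| = |V|/2`, the
vertices of `A` adjacent to `T` number at most `|A \ T| ≤ |T ∩ B|`, while the remaining vertices of
`A` have all their neighbours in the smaller set `B \ T`.
-/

section

variable {V : Type*} {G : SimpleGraph V}

lemma IsIndep.union {S T : Set V} (hS : IsIndep G S) (hT : IsIndep G T)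
    (hST : ∀ s ∈ S, ∀ t ∈ T, ¬ G.Adj s t) : IsIndep G (S ∪ T) := by
  rintro u (hu | hu) v (hv | hv) huv
  exacts [hS u hu v hv huv, hST u hu v hv huv, hST v hv u hu huv.symm, hT u hu v hv huv]

lemma exists_isMaxIndep_superset [Finite V] {I : Finset V} (hI : IsIndep G I) :
    ∃ T : Finset V, I ⊆ T ∧ IsMaxIndep G T := by
  obtain ⟨T, hIT, hT⟩ := Finite.exists_le_maximal (p := fun T : Finset V => IsIndep G T) hI
  refine ⟨T, hIT, hT.prop, fun T' hT' hTT' => ?_⟩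
  lift T' to Finset V using T'.toFinite
  exact congrArg _ (hT.eq_of_ge hT' (Finset.coe_subset.mp hTT'))

lemma exists_isPerfectMatching_of_injective [Fintype V] {S : Finset V} {f : S → V}
    (hf : Function.Injective f) (hfS : ∀ x, f x ∉ S) (hadj : ∀ x : S, G.Adj x (f x))
    (hcard : 2 * S.card = Fintype.card V) : ∃ M : G.Subgraph, M.IsPerfectMatching := by
  have hdisj : Disjoint (S : Set V) (Set.range f) :=
    Set.disjoint_right.mpr fun _ ⟨x, hx⟩ => hx ▸ hfS x
  obtain ⟨M, hMverts, hM⟩ := SimpleGraph.Subgraph.IsMatching.exists_of_disjoint_sets_of_equiv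
    hdisj (Equiv.ofInjective f hf) hadj
  refine ⟨M, hM, SimpleGraph.Subgraph.isSpanning_iff.mpr ?_⟩
  rw [hMverts]
  apply Set.eq_of_subset_of_ncard_le (Set.subset_univ _)
  rw [Set.ncard_union_eq hdisj, Set.ncard_range_of_injective hf, Set.ncard_univ,
    Set.ncard_coe_finset]
  simp only [Nat.card_eq_fintype_card, Fintype.card_coe]
  omega

section VeryWellCovered

variable [Fintype V]
  (hvwc : ∀ S : Finset V, IsMaxIndep G ↑S → 2 * S.card = Fintype.card V)
include hvwc

lemma two_mul_card_le_of_isIndep {I : Finset V} (hI : IsIndep G I) :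
    2 * I.card ≤ Fintype.card V := by
  obtain ⟨T, hIT, hT⟩ := exists_isMaxIndep_superset hI
  have := Finset.card_le_card hIT
  have := hvwc T hT
  omega

lemma card_sdiff_le_card_inter [DecidableEq V] {A B T : Finset V} (hA : IsIndep G A)
    (hAB : ∀ a ∈ A, ∀ b, G.Adj a b → b ∈ B) (hT : IsIndep G T)
    (hTcard : 2 * T.card = Fintype.card V) : (A \ T).card ≤ (T ∩ B).card := by
  have hind : IsIndep G ↑((T \ B) ∪ (A \ T)) := by
    rw [Finset.coe_union]
    refine IsIndep.union (fun u hu v hv => hT u ?_ v ?_) (fun u hu v hv => hA u ?_ v ?_) ?_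
    all_goals simp_all
    exact fun t _ htB a ha _ hat => htB (hAB a ha t hat.symm)
  have hdisj : Disjoint (T \ B) (A \ T) :=
    Finset.disjoint_left.mpr fun x hx hx' => (Finset.mem_sdiff.mp hx').2 (Finset.mem_sdiff.mp hx).1
  have := two_mul_card_le_of_isIndep hvwc hind
  rw [Finset.card_union_of_disjoint hdisj] at this
  have := Finset.card_sdiff_add_card_inter T B
  omega

lemma card_le_card_of_forall_adj_mem {B A : Finset V} (hA : IsIndep G A)
    (hne : ∀ a ∈ A, ∃ b, G.Adj a b) (hAB : ∀ a ∈ A, ∀ b, G.Adj a b → b ∈ B) :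
    A.card ≤ B.card := by
  classical
  induction B using Finset.strongInduction generalizing A with
  | H B ih =>
  obtain rfl | ⟨a₀, ha₀⟩ := A.eq_empty_or_nonempty
  · simp
  obtain ⟨b₀, hab₀⟩ := hne a₀ ha₀
  obtain ⟨T, hb₀T, hT⟩ := exists_isMaxIndep_superset (G := G) (I := {b₀}) (by simp [IsIndep])
  set A' := A.filter fun a => ∀ t ∈ T, ¬ G.Adj a t
  have hA' : A'.card ≤ (B \ T).card := by
    refine ih (B \ T) ?_ (fun u hu v hv => hA u ?_ v ?_) (fun a ha => hne a ?_) ?_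
    · refine Finset.ssubset_iff_of_subset Finset.sdiff_subset |>.mpr ⟨b₀, hAB a₀ ha₀ b₀ hab₀, ?_⟩
      simpa using fun _ => Finset.singleton_subset_iff.mp hb₀T
    all_goals simp_all [A']
    exact fun a ha haT b hab => ⟨hAB a ha b hab, fun hbT => haT b hbT hab⟩
  have hA'c : (A.filter fun a => ¬ ∀ t ∈ T, ¬ G.Adj a t) ⊆ A \ T := by
    intro a
    simp only [Finset.mem_filter, Finset.mem_sdiff, not_forall, not_not]
    exact fun ⟨ha, t, htT, hat⟩ => ⟨ha, fun haT => hT.1 a haT t htT hat⟩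
  have hexch := card_sdiff_le_card_inter hvwc hA hAB hT.1 (hvwc T hT)
  have := Finset.card_le_card hA'c
  have : A'.card + (A.filter fun a => ¬ ∀ t ∈ T, ¬ G.Adj a t).card = A.card :=
    Finset.card_filter_add_card_filter_not _
  have := Finset.card_sdiff_add_card_inter B T
  rw [Finset.inter_comm] at hexch
  omega

lemma card_le_card_biUnion_neighborFinset [DecidableEq V] [DecidableRel G.Adj]
    (hiso : NoIsolated G) {S : Finset V} (hS : IsIndep G S) (s : Finset S) :
    s.card ≤ (s.biUnion fun x => G.neighborFinset x).card := by
  have hmem : ∀ a ∈ s.map (Function.Embedding.subtype (· ∈ S)), ∃ h : a ∈ S, ⟨a, h⟩ ∈ s := by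
    simp
  rw [← Finset.card_map (Function.Embedding.subtype _)]
  refine card_le_card_of_forall_adj_mem hvwc
    (fun u hu v hv => hS u (hmem u hu).1 v (hmem v hv).1) (fun a _ => hiso a) fun a ha b hab => ?_
  obtain ⟨haS, has⟩ := hmem a ha
  exact Finset.mem_biUnion.mpr ⟨⟨a, haS⟩, has, (G.mem_neighborFinset a b).mpr hab⟩

end VeryWellCovered

end

theorem veryWellCovered_perfectMatching_general {V : Type*} [Fintype V]
    (G : SimpleGraph V) (hiso : NoIsolated G)
    (hvwc : ∀ S : Finset V, IsMaxIndep G ↑S → 2 * S.card = Fintype.card V) :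
    ∃ M : SimpleGraph.Subgraph G, M.IsPerfectMatching := by
  classical
  obtain ⟨S, -, hS⟩ := exists_isMaxIndep_superset (G := G) (I := ∅) (by simp [IsIndep])
  obtain ⟨f, hf, hfN⟩ := (Finset.all_card_le_biUnion_card_iff_exists_injective _).mp
    (card_le_card_biUnion_neighborFinset hvwc hiso hS.1)
  have hadj : ∀ x : S, G.Adj x (f x) := fun x => (G.mem_neighborFinset _ _).mp (hfN x)
  exact exists_isPerfectMatching_of_injective hf
    (fun x hx => hS.1 x (by simp) (f x) hx (hadj x)) hadj (hvwc S hS)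

/-- Remark 2.2 of [GV2]. A very well-covered graph — one with no
isolated vertices in which every maximal independent set has cardinality `|V(G)|/2` —
has a perfect matching. -/
theorem veryWellCovered_perfectMatching {V : Type*} [Fintype V] [DecidableEq V]
    (G : SimpleGraph V) (hiso : NoIsolated G)
    (hvwc : ∀ S : Finset V, IsMaxIndep G ↑S → 2 * S.card = Fintype.card V) :
    ∃ M : SimpleGraph.Subgraph G, M.IsPerfectMatching :=
  veryWellCovered_perfectMatching_general G hiso hvwc
end
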